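/- arXiv:2103.00755 — 2 statements merged into one kernel-verified Lean document; each statement's English description precedes it below -/
import Mathlib

section
/- Let Z be a finite set of cardinality m ≥ 2 and Δ_m the probability simplex on Z. Suppose for each z ∈ Z the function L_z : Δ_m → ℝ is continuous and satisfies: π(z) > ν(z) implies L_z(π) < L_z(ν). If π* is an interior minimizer of π ↦ max_{z∈Z} L_z(π), then L_z(π*) = L_{z'}(π*) for all z, z' ∈ Z (i.e., any interior minimax point equalizes all the L_z values). -/
/-- any interior minimax mixture equalizes all losses. -/
theorem stmt_1 {Z : Type*} [Fintype Z]
    (hm : 2 ≤ Fintype.card Z)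
    (Δ : Set (Z → ℝ))
    (hΔ : Δ = {π | (∀ z, 0 ≤ π z ∧ π z ≤ 1) ∧ ∑ z, π z = 1})
    (L : Z → (Z → ℝ) → ℝ)
    (hcont : ∀ z, ContinuousOn (L z) Δ)
    (hmono : ∀ π ∈ Δ, ∀ ν ∈ Δ, ∀ z, π z > ν z → L z π < L z ν)
    (πs : Z → ℝ) (hπs : πs ∈ Δ) (hint : ∀ z, 0 < πs z)
    (hmin : ∀ π ∈ Δ, (⨆ z, L z πs) ≤ ⨆ z, L z π) :
    ∀ z z' : Z, L z πs = L z' πs := by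
  classical
  have hne : Nonempty Z := Fintype.card_pos_iff.mp (by omega)
  set M : ℝ := ⨆ z, L z πs with hMdef
  have hMsup : M = Finset.univ.sup' Finset.univ_nonempty (fun z => L z πs) := by
    rw [hMdef, Finset.sup'_univ_eq_ciSup]
  have hle : ∀ z, L z πs ≤ M := by
    intro z
    rw [hMsup]
    exact Finset.le_sup' (fun z => L z πs) (Finset.mem_univ z)
  by_contra h
  push_neg at h
  obtain ⟨za, zb, hab⟩ := h
  -- there is some z0 with L z0 πs < M
  have hz0 : ∃ z0, L z0 πs < M := by
    by_contra hc
    push_neg at hc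
    have ha : L za πs = M := le_antisymm (hle za) (hc za)
    have hb : L zb πs = M := le_antisymm (hle zb) (hc zb)
    exact hab (ha.trans hb.symm)
  obtain ⟨z0, hz0⟩ := hz0
  set S : Finset Z := Finset.univ.filter (fun z => L z πs = M) with hSdef
  have hz0S : z0 ∉ S := by
    simp only [hSdef, Finset.mem_filter, Finset.mem_univ, true_and]
    exact fun hh => absurd hh (ne_of_lt hz0)
  -- direction
  set d : Z → ℝ := fun w => (if w ∈ S then (1:ℝ) else 0) -
      (if w = z0 then (S.card : ℝ) else 0) with hddef
  have hdsum : ∑ w, d w = 0 := by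
    simp [hddef, Finset.sum_sub_distrib, Finset.sum_ite_eq', Finset.sum_ite_mem]
  set πt : ℝ → (Z → ℝ) := fun t => πs + t • d with hπtdef
  have hπt : ∀ t w, πt t w = πs w + t * d w := fun t w => rfl
  have hπssum : ∑ z, πs z = 1 := by
    rw [hΔ] at hπs; exact hπs.2
  have hsum : ∀ t, ∑ z, πt t z = 1 := by
    intro t
    simp only [hπt, Finset.sum_add_distrib, ← Finset.mul_sum, hπssum, hdsum]
    ring
  -- πs z < 1 for all z
  have hlt1 : ∀ z, πs z < 1 := by
    intro z
    obtain ⟨z', hz'⟩ := Fintype.exists_ne_of_one_lt_card (by omega) z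
    have hsub : ({z, z'} : Finset Z) ⊆ Finset.univ := Finset.subset_univ _
    have := Finset.sum_le_sum_of_subset_of_nonneg hsub
      (fun w _ _ => le_of_lt (hint w)) (f := πs)
    rw [Finset.sum_pair (Ne.symm hz'), hπssum] at this
    have := hint z'
    linarith
  -- tendsto of πt at 0 within positives
  have htend0 : Filter.Tendsto πt (nhdsWithin 0 (Set.Ioi 0)) (nhds πs) := by
    have hc : Continuous πt := by
      apply continuous_const.add
      exact continuous_id.smul continuous_const
    have := hc.tendsto 0
    simp only [hπtdef] at this ⊢
    have h0 : πs + (0:ℝ) • d = πs := by simp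
    rw [h0] at this
    exact this.mono_left nhdsWithin_le_nhds
  -- eventually πt t ∈ Δ
  have hmemΔ : ∀ᶠ t in nhdsWithin 0 (Set.Ioi 0), πt t ∈ Δ := by
    have hcoord : ∀ᶠ t in nhdsWithin 0 (Set.Ioi 0), ∀ z, πt t z ∈ Set.Ioo (0:ℝ) 1 := by
      rw [Filter.eventually_all]
      intro z
      have hcz : Filter.Tendsto (fun t => πt t z) (nhdsWithin 0 (Set.Ioi 0)) (nhds (πs z)) :=
        ((continuous_apply z).tendsto πs).comp htend0
      exact hcz.eventually (isOpen_Ioo.eventually_mem ⟨hint z, hlt1 z⟩)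
    filter_upwards [hcoord] with t ht
    rw [hΔ]
    exact ⟨fun z => ⟨le_of_lt (ht z).1, le_of_lt (ht z).2⟩, hsum t⟩
  -- eventually, losses outside S are < M
  have hout : ∀ᶠ t in nhdsWithin 0 (Set.Ioi 0), ∀ z, z ∉ S → L z (πt t) < M := by
    rw [Filter.eventually_all]
    intro z
    by_cases hzS : z ∈ S
    · exact Filter.Eventually.of_forall (fun t hz => absurd hzS hz)
    · have hzM : L z πs < M := by
        rcases lt_or_eq_of_le (hle z) with h' | h'
        · exact h'
        · exact absurd (by simp [hSdef, h']) hzS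
      have htendΔ : Filter.Tendsto πt (nhdsWithin 0 (Set.Ioi 0)) (nhdsWithin πs Δ) :=
        tendsto_nhdsWithin_iff.mpr ⟨htend0, hmemΔ⟩
      have hLz : Filter.Tendsto (fun t => L z (πt t)) (nhdsWithin 0 (Set.Ioi 0))
          (nhds (L z πs)) := (hcont z πs hπs).tendsto.comp htendΔ
      filter_upwards [hLz.eventually (isOpen_Iio.eventually_mem (show L z πs ∈ Set.Iio M from hzM))]
        with t ht _
      exact ht
  have hpos : ∀ᶠ t in nhdsWithin (0:ℝ) (Set.Ioi 0), t ∈ Set.Ioi (0:ℝ) :=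
    self_mem_nhdsWithin
  obtain ⟨t, htΔ, htout, htpos⟩ := (hmemΔ.and (hout.and hpos)).exists
  have htpos' : (0:ℝ) < t := htpos
  -- for z ∈ S, strict decrease by monotonicity
  have hinS : ∀ z ∈ S, L z (πt t) < M := by
    intro z hzS
    have hzne : z ≠ z0 := fun hh => hz0S (hh ▸ hzS)
    have hd : d z = 1 := by simp [hddef, hzS, hzne]
    have hgt : πt t z > πs z := by
      rw [hπt, hd]; linarith
    have := hmono (πt t) htΔ πs hπs z hgt
    have hzM : L z πs = M := by
      simpa [hSdef] using hzS
    linarith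
  have hall : ∀ z, L z (πt t) < M := by
    intro z
    by_cases hzS : z ∈ S
    · exact hinS z hzS
    · exact htout z hzS
  have hsupt : (⨆ z, L z (πt t)) < M := by
    rw [← Finset.sup'_univ_eq_ciSup (f := fun z => L z (πt t))]
    exact (Finset.sup'_lt_iff Finset.univ_nonempty).mpr (fun z _ => hall z)
  exact absurd (hmin (πt t) htΔ) (not_le.mpr hsupt)
end

section
/- Let Z be a finite set and Δ the probability simplex on Z. Suppose for each z the function L_z : Δ → ℝ satisfies the strict monotonicity property: π(z) > ν(z) implies L_z(π) < L_z(ν). If π* and π̃* are both equalizers (i.e., L_z(π*) is constant in z, and L_z(π̃*) is constant in z) that both achieve the same minimax value min_π max_z L_z(π), then π* = π̃*. That is, the loss-equalizing minimax mixture distribution is unique. -/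
/-- uniqueness of the loss-equalizing minimax mixture distribution. -/
theorem stmt_2 {Z : Type*} [Fintype Z]
    (Δ : Set (Z → ℝ))
    (hΔ : Δ = {π | (∀ z, 0 ≤ π z ∧ π z ≤ 1) ∧ ∑ z, π z = 1})
    (L : Z → (Z → ℝ) → ℝ)
    (hmono : ∀ π ∈ Δ, ∀ ν ∈ Δ, ∀ z, π z > ν z → L z π < L z ν)
    (π₁ π₂ : Z → ℝ) (h₁ : π₁ ∈ Δ) (h₂ : π₂ ∈ Δ)
    (c₁ c₂ : ℝ) (heq₁ : ∀ z, L z π₁ = c₁) (heq₂ : ∀ z, L z π₂ = c₂)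
    (hopt₁ : ∀ π ∈ Δ, (⨆ z, L z π₁) ≤ ⨆ z, L z π)
    (hopt₂ : ∀ π ∈ Δ, (⨆ z, L z π₂) ≤ ⨆ z, L z π) :
    π₁ = π₂ := by
  subst hΔ
  by_contra hne
  have hs : ∑ z, π₁ z = ∑ z, π₂ z := by rw [h₁.2, h₂.2]
  obtain ⟨z0, hz0⟩ : ∃ z, π₁ z ≠ π₂ z := by
    by_contra hc'; push_neg at hc'; exact hne (funext hc')
  obtain ⟨a, ha⟩ : ∃ a, π₂ a < π₁ a := by
    by_contra hc; push_neg at hc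
    have : ∑ z, π₁ z < ∑ z, π₂ z :=
      Finset.sum_lt_sum (fun i _ => hc i)
        ⟨z0, Finset.mem_univ z0, lt_of_le_of_ne (hc z0) hz0⟩
    linarith
  obtain ⟨b, hb⟩ : ∃ b, π₁ b < π₂ b := by
    by_contra hc; push_neg at hc
    have : ∑ z, π₂ z < ∑ z, π₁ z :=
      Finset.sum_lt_sum (fun i _ => hc i)
        ⟨z0, Finset.mem_univ z0, lt_of_le_of_ne (hc z0) (Ne.symm hz0)⟩
    linarith
  have hA := hmono π₁ h₁ π₂ h₂ a ha
  have hB := hmono π₂ h₂ π₁ h₁ b hb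
  rw [heq₁, heq₂] at hA hB
  linarith
end
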